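/- Let S_bl = ℚ[x₁,…,x₇]/K_bl, where K_bl is the ideal generated by x₁−x₅+x₇, x₂−x₅+x₇, x₃−x₅+x₇, x₄−x₅−x₆+x₇, x₁x₂x₃x₄, x₁x₂x₃x₅, x₄x₆, x₅x₇, x₆x₇, 3x₅³−2x₇³, x₆³−x₇³. Then for all A, B, C ∈ ℚ, the identity (A·x₅ + B·x₆ + C·x₇)³ = (2A³/3 + 3A²B − 3AB² + B³ + C³)·x₇³ holds in S_bl. -/
import Mathlib


open MvPolynomial

noncomputable section

/-- The presentation ideal for the even cohomology ring of the Calabi–Yau `Y ∈ 𝒳_bl`: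
the ideal of `H^*(ℙ⁴_bl,ℚ)` together with the kernel of cup product with `[Y]`.
Variables `X 0, …, X 6` are `x₁, …, x₇`. -/
def Kbl : Ideal (MvPolynomial (Fin 7) ℚ) := Ideal.span
  {X 0 - X 4 + X 6, X 1 - X 4 + X 6, X 2 - X 4 + X 6, X 3 - X 4 - X 5 + X 6,
   X 0 * X 1 * X 2 * X 3, X 0 * X 1 * X 2 * X 4, X 3 * X 5, X 4 * X 6, X 5 * X 6,
   3 * X 4 ^ 3 - 2 * X 6 ^ 3, X 5 ^ 3 - X 6 ^ 3}

set_option maxHeartbeats 1000000 in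
/-- The trilinear cup-product form of `𝒳_bl`: in `S_bl = ℚ[x₁,…,x₇]/K_bl` one has
`(A x₅ + B x₆ + C x₇)³ = (2A³/3 + 3A²B - 3AB² + B³ + C³) x₇³`. -/
theorem trilinear_form_bl (a b c : ℚ) :
    Ideal.Quotient.mk Kbl ((C a * X 4 + C b * X 5 + C c * X 6) ^ 3) =
    Ideal.Quotient.mk Kbl
      (C (2 * a ^ 3 / 3 + 3 * a ^ 2 * b - 3 * a * b ^ 2 + b ^ 3 + c ^ 3) * X 6 ^ 3) := by
  have hG4 : (X 3 - X 4 - X 5 + X 6 : MvPolynomial (Fin 7) ℚ) ∈ Kbl :=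
    Ideal.subset_span (by simp [Set.mem_insert_iff])
  have hG7 : (X 3 * X 5 : MvPolynomial (Fin 7) ℚ) ∈ Kbl :=
    Ideal.subset_span (by simp [Set.mem_insert_iff])
  have hG8 : (X 4 * X 6 : MvPolynomial (Fin 7) ℚ) ∈ Kbl :=
    Ideal.subset_span (by simp [Set.mem_insert_iff])
  have hG9 : (X 5 * X 6 : MvPolynomial (Fin 7) ℚ) ∈ Kbl :=
    Ideal.subset_span (by simp [Set.mem_insert_iff])
  have hG10 : (3 * X 4 ^ 3 - 2 * X 6 ^ 3 : MvPolynomial (Fin 7) ℚ) ∈ Kbl :=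
    Ideal.subset_span (by simp [Set.mem_insert_iff])
  have hG11 : (X 5 ^ 3 - X 6 ^ 3 : MvPolynomial (Fin 7) ℚ) ∈ Kbl :=
    Ideal.subset_span (by simp [Set.mem_insert_iff])
  have key : C (3:ℚ) * (C a * X 4 + C b * X 5 + C c * X 6) ^ 3
      - C (2*a^3 + 9*a^2*b - 9*a*b^2 + 3*b^3 + 3*c^3) * X 6 ^ 3 ∈ Kbl := by
    have e : (C (3:ℚ) * (C a * X 4 + C b * X 5 + C c * X 6) ^ 3
        - C (2*a^3 + 9*a^2*b - 9*a*b^2 + 3*b^3 + 3*c^3) * X 6 ^ 3 : MvPolynomial (Fin 7) ℚ) =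
        (9*C a^2*C b*(X 5^2 - X 4*X 5) - 9*C a*C b^2*X 5^2) * (X 3 - X 4 - X 5 + X 6)
        + (9*C a^2*C b*(X 4 - X 5) + 9*C a*C b^2*X 5) * (X 3 * X 5)
        + (9*C a^2*C c*X 4 + 9*C a*C c^2*X 6) * (X 4 * X 6)
        + (9*C a^2*C b*(X 4 - X 5) + 9*C a*C b^2*X 5 + 9*C b^2*C c*X 5
            + 9*C b*C c^2*X 6 + 18*C a*C b*C c*X 4) * (X 5 * X 6)
        + (C a^3) * (3 * X 4 ^ 3 - 2 * X 6 ^ 3)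
        + (3*C b^3 + 9*C a^2*C b - 9*C a*C b^2) * (X 5 ^ 3 - X 6 ^ 3) := by
      simp only [C_add, C_sub, C_mul, C_pow, map_ofNat]
      ring
    rw [e]
    exact add_mem (add_mem (add_mem (add_mem (add_mem
      (Ideal.mul_mem_left _ _ hG4) (Ideal.mul_mem_left _ _ hG7))
      (Ideal.mul_mem_left _ _ hG8)) (Ideal.mul_mem_left _ _ hG9))
      (Ideal.mul_mem_left _ _ hG10)) (Ideal.mul_mem_left _ _ hG11)
  have h1 : Ideal.Quotient.mk Kbl (C (3:ℚ) * (C a * X 4 + C b * X 5 + C c * X 6) ^ 3) =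
      Ideal.Quotient.mk Kbl (C (2*a^3 + 9*a^2*b - 9*a*b^2 + 3*b^3 + 3*c^3) * X 6 ^ 3) :=
    Ideal.Quotient.eq.mpr key
  have e1 : ((C a * X 4 + C b * X 5 + C c * X 6) ^ 3 : MvPolynomial (Fin 7) ℚ) =
      C ((3:ℚ)⁻¹) * (C (3:ℚ) * (C a * X 4 + C b * X 5 + C c * X 6) ^ 3) := by
    rw [← mul_assoc, ← C_mul]
    norm_num
  have e2 : (C (2 * a ^ 3 / 3 + 3 * a ^ 2 * b - 3 * a * b ^ 2 + b ^ 3 + c ^ 3) * X 6 ^ 3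
      : MvPolynomial (Fin 7) ℚ) =
      C ((3:ℚ)⁻¹) * (C (2*a^3 + 9*a^2*b - 9*a*b^2 + 3*b^3 + 3*c^3) * X 6 ^ 3) := by
    rw [← mul_assoc, ← C_mul]
    congr 1
    ring
  calc Ideal.Quotient.mk Kbl ((C a * X 4 + C b * X 5 + C c * X 6) ^ 3)
      = Ideal.Quotient.mk Kbl (C ((3:ℚ)⁻¹)) *
        Ideal.Quotient.mk Kbl (C (3:ℚ) * (C a * X 4 + C b * X 5 + C c * X 6) ^ 3) := by
        rw [← map_mul, ← e1]
    _ = Ideal.Quotient.mk Kbl (C ((3:ℚ)⁻¹)) *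
        Ideal.Quotient.mk Kbl (C (2*a^3 + 9*a^2*b - 9*a*b^2 + 3*b^3 + 3*c^3) * X 6 ^ 3) := by
        rw [h1]
    _ = Ideal.Quotient.mk Kbl
        (C (2 * a ^ 3 / 3 + 3 * a ^ 2 * b - 3 * a * b ^ 2 + b ^ 3 + c ^ 3) * X 6 ^ 3) := by
        rw [← map_mul, ← e2]

end
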